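/- arXiv:2412.15863 — 2 statements merged into one kernel-verified Lean document; each statement's English description precedes it below -/
import Mathlib

section
/- Let σ_{t-1}(x_t) denote GP posterior standard deviations with kernel bounded by k(x,x) ≤ 1 and λ = 1 + 2/T. Then ∑_{t=1}^T σ_{t-1}(x_t) ≤ √(4(T+2)·γ_T), where γ_T = max over query sequences of (1/2)log det(I + λ⁻¹K_T) is the maximum information gain. Equivalently, in finite dimensions: for vectors with ‖φ_t‖² ≤ 1 and V_t = λI + ∑_{s≤t}φ_sφ_sᵀ, ∑_{t=1}^T √(λ·φ_tᵀV_{t-1}⁻¹φ_t) ≤ √(4(T+2)·(1/2)log det(I + λ⁻¹K_T)). -/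
/-!
Let `V_s = λI + ∑_{i < s} φ_i φ_iᵀ` and `w_t = φ_tᵀ V_t⁻¹ φ_t`. The matrix determinant lemma gives
`det V_{t+1} = det V_t · (1 + w_t)`, so `det V_T = λⁿ ∏ (1 + w_t)`, and by the Weinstein–Aronszajn
identity `det (I + λ⁻¹ K) = λ⁻ⁿ det V_T = ∏ (1 + w_t)`. Since `V_t ⪰ λI` and `‖φ_t‖ ≤ 1`, each
`w_t ≤ λ⁻¹ ≤ 1`, and on `[0, 1]` we have `w ≤ 2 log (1 + w)`. Cauchy–Schwarz then gives
`(∑ √(λ w_t))² ≤ Tλ ∑ w_t ≤ 2Tλ log det (I + λ⁻¹ K)`, and `Tλ ≤ T + 2`.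
-/

open Matrix Finset

theorem det_add_vecMulVec {m R : Type*} [Fintype m] [DecidableEq m] [CommRing R]
    {A : Matrix m m R} (hA : IsUnit A.det) (u v : m → R) :
    (A + vecMulVec u v).det = A.det * (1 + v ⬝ᵥ A⁻¹ *ᵥ u) := by
  have hfactor : A + vecMulVec u v = A * (1 + vecMulVec (A⁻¹ *ᵥ u) v) := by
    rw [Matrix.mul_add, Matrix.mul_one, mul_vecMulVec, mulVec_mulVec,
      mul_nonsing_inv _ hA, one_mulVec]
  rw [hfactor, det_mul, vecMulVec_eq Unit, det_one_add_replicateCol_mul_replicateRow]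

theorem dotProduct_smul_one_add_inv_mulVec_le {m : Type*} [Fintype m] [DecidableEq m] {lam : ℝ}
    (hlam : 0 < lam) {S : Matrix m m ℝ} (hS : S.PosSemidef) (v : m → ℝ) :
    v ⬝ᵥ (lam • 1 + S)⁻¹ *ᵥ v ≤ lam⁻¹ * (v ⬝ᵥ v) := by
  set A := lam • (1 : Matrix m m ℝ) + S
  have hA : A.PosDef := (PosDef.one.smul hlam).add_posSemidef hS
  set y := A⁻¹ *ᵥ v
  have hAy : A *ᵥ y = v := by
    rw [mulVec_mulVec, mul_nonsing_inv _ hA.det_pos.ne'.isUnit, one_mulVec]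
  -- `v ⬝ y = y ⬝ A y ≥ λ ‖y‖²`, so `0 ≤ ‖v - λ y‖² ≤ ‖v‖² - λ (v ⬝ y)`.
  have hquad : lam * (y ⬝ᵥ y) ≤ v ⬝ᵥ y := by
    have := hS.dotProduct_mulVec_nonneg y
    rw [star_trivial, dotProduct_comm] at this
    rw [← hAy, add_mulVec, add_dotProduct, smul_mulVec, one_mulVec, smul_dotProduct,
      smul_eq_mul]
    linarith
  have hsq : 0 ≤ (v - lam • y) ⬝ᵥ (v - lam • y) := by
    simpa using dotProduct_self_star_nonneg (v - lam • y)
  simp only [sub_dotProduct, dotProduct_sub, smul_dotProduct, dotProduct_smul, smul_eq_mul,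
    dotProduct_comm y v] at hsq
  rw [le_inv_mul_iff₀ hlam]
  nlinarith

theorem le_two_mul_log_one_add {w : ℝ} (h0 : 0 ≤ w) (h1 : w ≤ 1) :
    w ≤ 2 * Real.log (1 + w) := by
  have hlog := Real.one_sub_inv_le_log_of_pos (by linarith : 0 < 1 + w)
  have : w / 2 ≤ 1 - (1 + w)⁻¹ := by
    rw [le_sub_comm, inv_le_iff_one_le_mul₀ (by linarith)]
    nlinarith
  linarith

theorem posSemidef_sum_vecMulVec_self {ι m : Type*} [Fintype m] (φ : ι → m → ℝ)
    (s : Finset ι) : (∑ i ∈ s, vecMulVec (φ i) (φ i)).PosSemidef :=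
  posSemidef_sum s fun i _ => by simpa using posSemidef_vecMulVec_self_star (φ i)

section RegularizedGram

variable {ι m : Type*} [Fintype m] [DecidableEq m]

def regularizedGram (lam : ℝ) (φ : ι → m → ℝ) (s : Finset ι) : Matrix m m ℝ :=
  lam • 1 + ∑ i ∈ s, vecMulVec (φ i) (φ i)

theorem regularizedGram_posDef {lam : ℝ} (hlam : 0 < lam) (φ : ι → m → ℝ) (s : Finset ι) :
    (regularizedGram lam φ s).PosDef :=
  (PosDef.one.smul hlam).add_posSemidef (posSemidef_sum_vecMulVec_self φ s)

theorem det_regularizedGram_eq_prod [LinearOrder ι] {lam : ℝ} (hlam : 0 < lam) (φ : ι → m → ℝ)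
    (s : Finset ι) :
    (regularizedGram lam φ s).det = lam ^ Fintype.card m *
      ∏ t ∈ s, (1 + φ t ⬝ᵥ (regularizedGram lam φ {i ∈ s | i < t})⁻¹ *ᵥ φ t) := by
  induction s using Finset.induction_on_max with
  | empty => simp [regularizedGram]
  | insert a s hlt ih =>
    have ha : a ∉ s := fun h => (hlt a h).false
    have hbelow_a : {i ∈ insert a s | i < a} = s := by
      rw [filter_insert, if_neg (lt_irrefl a), filter_true_of_mem hlt]
    have hbelow_t : ∀ t ∈ s, {i ∈ insert a s | i < t} = {i ∈ s | i < t} := fun t ht => by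
      rw [filter_insert, if_neg (hlt t ht).not_gt]
    have hstep : regularizedGram lam φ (insert a s) =
        regularizedGram lam φ s + vecMulVec (φ a) (φ a) := by
      simp only [regularizedGram, sum_insert ha]; abel
    rw [prod_insert ha, hbelow_a, prod_congr rfl fun t ht => by rw [hbelow_t t ht], hstep,
      det_add_vecMulVec (regularizedGram_posDef hlam φ s).det_pos.ne'.isUnit, ih]
    ring

theorem det_one_add_smul_gram [Fintype ι] [DecidableEq ι] (c : ℝ) (φ : ι → m → ℝ) :
    (1 + c • of fun i j => φ i ⬝ᵥ φ j).det = (1 + c • ∑ i, vecMulVec (φ i) (φ i)).det := by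
  have hK : (of fun i j => φ i ⬝ᵥ φ j) = of φ * (of φ)ᵀ := by
    ext i j; simp [mul_apply, dotProduct]
  have hG : ∑ i, vecMulVec (φ i) (φ i) = (of φ)ᵀ * of φ := by
    ext i j; simp [mul_apply, Matrix.sum_apply, vecMulVec_apply]
  rw [hK, hG, ← Matrix.mul_smul, ← Matrix.smul_mul, det_one_add_mul_comm]

theorem det_one_add_inv_smul_gram_eq_prod [Fintype ι] [LinearOrder ι] {lam : ℝ} (hlam : 0 < lam)
    (φ : ι → m → ℝ) :
    (1 + lam⁻¹ • of fun i j => φ i ⬝ᵥ φ j).det =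
      ∏ t, (1 + φ t ⬝ᵥ (regularizedGram lam φ {i | i < t})⁻¹ *ᵥ φ t) := by
  have hV : regularizedGram lam φ univ = lam • (1 + lam⁻¹ • ∑ i, vecMulVec (φ i) (φ i)) := by
    rw [regularizedGram, smul_add, smul_smul, mul_inv_cancel₀ hlam.ne', one_smul]
  have := det_regularizedGram_eq_prod hlam φ univ
  rw [hV, det_smul, ← det_one_add_smul_gram] at this
  exact mul_left_cancel₀ (pow_ne_zero _ hlam.ne') this

end RegularizedGram

theorem sum_sqrt_le_sqrt_card_mul_sum {ι : Type*} (s : Finset ι) {f : ι → ℝ}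
    (hf : ∀ i, 0 ≤ f i) : ∑ i ∈ s, √(f i) ≤ √(#s * ∑ i ∈ s, f i) := by
  simpa [Real.sqrt_mul] using Real.sum_sqrt_mul_sqrt_le s (fun _ => zero_le_one) hf

theorem sum_posterior_stddev_le_general (n T : ℕ) (lam : ℝ)
    (hlam : lam = 1 + 2 / (T : ℝ)) (φ : Fin T → Fin n → ℝ)
    (hφ : ∀ t, φ t ⬝ᵥ φ t ≤ 1) :
    ∑ t : Fin T, Real.sqrt (lam * (φ t ⬝ᵥ ((lam • (1 : Matrix (Fin n) (Fin n) ℝ) +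
        ∑ s ∈ Finset.univ.filter (fun s => s < t),
          vecMulVec (φ s) (φ s))⁻¹ *ᵥ φ t)))
      ≤ Real.sqrt (4 * ((T : ℝ) + 2) *
        ((1 / 2) * Real.log (Matrix.det ((1 : Matrix (Fin T) (Fin T) ℝ) +
          lam⁻¹ • Matrix.of (fun i j : Fin T => φ i ⬝ᵥ φ j))))) := by
  have hlam1 : 1 ≤ lam := by
    rw [hlam]; linarith [show 0 ≤ 2 / (T : ℝ) by positivity]
  have hlam0 : 0 < lam := by linarith
  have hTlam : (T : ℝ) * lam ≤ T + 2 := by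
    rw [hlam, mul_add, mul_one, mul_div_assoc']
    gcongr
    exact div_le_of_le_mul₀ (by positivity) zero_le_two (by rw [mul_comm])
  set w : Fin T → ℝ := fun t => φ t ⬝ᵥ (regularizedGram lam φ {s | s < t})⁻¹ *ᵥ φ t
  have hw0 : ∀ t, 0 ≤ w t := fun t => by
    simpa using (regularizedGram_posDef hlam0 φ _).inv.posSemidef.dotProduct_mulVec_nonneg (φ t)
  have hw1 : ∀ t, w t ≤ 1 := fun t => calc
    w t ≤ lam⁻¹ * (φ t ⬝ᵥ φ t) :=
      dotProduct_smul_one_add_inv_mulVec_le hlam0 (posSemidef_sum_vecMulVec_self φ _) (φ t)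
    _ ≤ 1 := by
      rw [inv_mul_le_iff₀ hlam0]; linarith [hφ t]
  have hlog : ∑ t, w t ≤ 2 * ∑ t, Real.log (1 + w t) := by
    rw [mul_sum]; exact sum_le_sum fun t _ => le_two_mul_log_one_add (hw0 t) (hw1 t)
  have hlog0 : 0 ≤ ∑ t, Real.log (1 + w t) :=
    sum_nonneg fun t _ => Real.log_nonneg (by linarith [hw0 t])
  change ∑ t, √(lam * w t) ≤ _
  rw [det_one_add_inv_smul_gram_eq_prod hlam0, Real.log_prod fun t _ => by linarith [hw0 t]]
  calc ∑ t, √(lam * w t) ≤ √(T * ∑ t, lam * w t) := by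
        simpa using sum_sqrt_le_sqrt_card_mul_sum univ fun t => mul_nonneg hlam0.le (hw0 t)
    _ ≤ _ := by
      refine Real.sqrt_le_sqrt ?_
      rw [← mul_sum]
      nlinarith [mul_le_mul_of_nonneg_left hlog (mul_nonneg T.cast_nonneg hlam0.le),
        mul_le_mul_of_nonneg_right hTlam hlog0]

/-- Cumulative posterior standard deviation bound (finite-dimensional form):
for vectors with `‖φ t‖² ≤ 1`, `λ = 1 + 2/T`, and `V_{t-1} = λ I + ∑_{s<t} φ_s φ_sᵀ`,
`∑ t, √(λ · φ_tᵀ V_{t-1}⁻¹ φ_t) ≤ √(4 (T+2) · (1/2) log det (I + λ⁻¹ K))`. -/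
theorem sum_posterior_stddev_le (n T : ℕ) (hT : 0 < T) (lam : ℝ)
    (hlam : lam = 1 + 2 / (T : ℝ)) (φ : Fin T → Fin n → ℝ)
    (hφ : ∀ t, φ t ⬝ᵥ φ t ≤ 1) :
    ∑ t : Fin T, Real.sqrt (lam * (φ t ⬝ᵥ ((lam • (1 : Matrix (Fin n) (Fin n) ℝ) +
        ∑ s ∈ Finset.univ.filter (fun s => s < t),
          vecMulVec (φ s) (φ s))⁻¹ *ᵥ φ t)))
      ≤ Real.sqrt (4 * ((T : ℝ) + 2) *
        ((1 / 2) * Real.log (Matrix.det ((1 : Matrix (Fin T) (Fin T) ℝ) +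
          lam⁻¹ • Matrix.of (fun i j : Fin T => φ i ⬝ᵥ φ j))))) :=
  sum_posterior_stddev_le_general n T lam hlam φ hφ
end

section
/- Let X_t be a nonnegative stochastic process adapted to a filtration {F_t} with conditional means m_t = E[X_t | F_{t−1}], and suppose X_t ≤ b_t for a fixed nondecreasing sequence (b_t) with b_T ≥ 1. Then with probability at least 1 − δ, for any T ≥ 1, ∑_{t=1}^T m_t ≤ 2∑_{t=1}^T X_t + 4 b_T log(1/δ) + 8 b_T log(4 b_T) + 1. -/
/-!
For a scale `l ≥ 0`, the bound `exp (-x) ≤ 1 - x + x ^ 2 / 2` gives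
`E[exp (-l X_t) | F_{t-1}] ≤ exp (-(l - l ^ 2 b_t / 2) m_t)`, so
`exp (∑_{t ≤ n} (l (1 - l b_t / 2) m_t - l X_t))` is a nonnegative supermartingale starting at `1`,
and by Ville's maximal inequality it ever reaches `2 ^ (k + 1) / δ` with probability at most
`δ / 2 ^ (k + 1)`. A union bound over the scales `l = 2⁻ᵏ` leaves an event of probability
at least `1 - δ` on which no threshold is ever reached. Given `T`, the scale with
`b_T < 2 ^ k ≤ 2 b_T` has `l b_t ≤ 1` for `t ≤ T`, hence `l (1 - l b_t / 2) ≥ l / 2`, and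
rearranging the non-crossing inequality at time `T` gives the bound.
-/

open MeasureTheory Finset
open scoped ENNReal

namespace Real

theorem exp_neg_le_one_sub_add_sq_div_two {x : ℝ} (hx : 0 ≤ x) :
    exp (-x) ≤ 1 - x + x ^ 2 / 2 := by
  let g : ℝ → ℝ := fun y => 1 - y + y ^ 2 / 2 - exp (-y)
  have hg : ∀ y, HasDerivAt g (-1 + y + exp (-y)) y := fun y => by
    refine ((((hasDerivAt_id' y).const_sub 1).add ((hasDerivAt_pow 2 y).div_const 2)).sub
      (hasDerivAt_id' y).neg.exp).congr_deriv ?_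
    simp only [Pi.neg_apply]; push_cast; ring
  have hmono : MonotoneOn g (Set.Ici 0) :=
    monotoneOn_of_deriv_nonneg (convex_Ici 0) (HasDerivAt.continuousOn fun y _ => hg y)
      (fun y _ => (hg y).differentiableAt.differentiableWithinAt) fun y _ => by
        rw [(hg y).deriv]; linarith [add_one_le_exp (-y)]
  have := hmono Set.self_mem_Ici hx hx
  norm_num [g] at this
  linarith

theorem exp_neg_mul_le_one_add_mul {l y c : ℝ} (hl : 0 ≤ l) (hy : 0 ≤ y) (hyc : y ≤ c) :
    exp (-(l * y)) ≤ 1 + (l ^ 2 * c / 2 - l) * y := by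
  have hsq : (l * y) ^ 2 ≤ l ^ 2 * c * y := by
    rw [mul_pow, sq y, mul_assoc]
    exact mul_le_mul_of_nonneg_left (mul_le_mul_of_nonneg_right hyc hy) (sq_nonneg l)
  linarith [exp_neg_le_one_sub_add_sq_div_two (mul_nonneg hl hy)]

end Real

section

variable {Ω : Type*} {m m0 : MeasurableSpace Ω} {μ : Measure Ω}

theorem condExp_exp_neg_mul_le [IsFiniteMeasure μ] (hm : m ≤ m0) {Y : Ω → ℝ}
    (hY : AEMeasurable Y μ) {c l : ℝ} (hYc : ∀ ω, Y ω ∈ Set.Icc 0 c) (hl : 0 ≤ l) :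
    μ[fun ω => Real.exp (-(l * Y ω))|m] ≤ᵐ[μ]
      fun ω => Real.exp ((l ^ 2 * c / 2 - l) * μ[Y|m] ω) := by
  set d := l ^ 2 * c / 2 - l
  have hY_int : Integrable Y μ := .of_mem_Icc 0 c hY (.of_forall hYc)
  have hexp_int : Integrable (fun ω => Real.exp (-(l * Y ω))) μ :=
    .of_mem_Icc 0 1 (hY.const_mul l).neg.exp (.of_forall fun ω =>
      ⟨(Real.exp_pos _).le, Real.exp_le_one_iff.2 (neg_nonpos.2 (mul_nonneg hl (hYc ω).1))⟩)
  have hmono : μ[fun ω => Real.exp (-(l * Y ω))|m] ≤ᵐ[μ] μ[fun ω => 1 + d * Y ω|m] :=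
    condExp_mono hexp_int ((integrable_const 1).add (hY_int.const_mul d))
      (.of_forall fun ω => Real.exp_neg_mul_le_one_add_mul hl (hYc ω).1 (hYc ω).2)
  have haffine : μ[fun ω => 1 + d * Y ω|m] =ᵐ[μ] fun ω => 1 + d * μ[Y|m] ω := by
    have hsum : (fun ω => 1 + d * Y ω) = (fun _ => (1 : ℝ)) + d • Y := rfl
    rw [hsum]
    filter_upwards [condExp_add (integrable_const 1) (hY_int.smul d) m,
      condExp_smul (μ := μ) d Y m] with ω hadd hsmul
    rw [hadd, Pi.add_apply, hsmul, condExp_const hm]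
    rfl
  filter_upwards [hmono, haffine] with ω hω hω'
  exact (hω.trans hω'.le).trans (by linarith [Real.add_one_le_exp (d * μ[Y|m] ω)])

theorem ae_condExp_mem_Icc [IsFiniteMeasure μ] (hm : m ≤ m0) {Y : Ω → ℝ} (hY : Integrable Y μ)
    {a c : ℝ} (hYc : ∀ᵐ ω ∂μ, Y ω ∈ Set.Icc a c) : ∀ᵐ ω ∂μ, μ[Y|m] ω ∈ Set.Icc a c := by
  filter_upwards [condExp_mono (integrable_const a) hY (hYc.mono fun _ h => h.1),
    condExp_mono hY (integrable_const c) (hYc.mono fun _ h => h.2)] with ω ha hc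
  rw [condExp_const hm] at ha hc
  exact ⟨ha, hc⟩

section Ville

variable {𝒢 : Filtration ℕ m0} {f : ℕ → Ω → ℝ}

theorem MeasureTheory.Supermartingale.integral_stoppedValue_le [IsFiniteMeasure μ]
    (hf : Supermartingale f 𝒢 μ) {τ : Ω → ℕ∞} (hτ : IsStoppingTime 𝒢 τ) {N : ℕ} (hbdd : ∀ ω, τ ω ≤ N) :
    ∫ ω, stoppedValue f τ ω ∂μ ≤ ∫ ω, f 0 ω ∂μ := by
  have h := hf.neg.expected_stoppedValue_mono (isStoppingTime_const 𝒢 0) hτ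
    (fun _ => bot_le) hbdd
  change ∫ ω, -f 0 ω ∂μ ≤ ∫ ω, -stoppedValue f τ ω ∂μ at h
  rwa [integral_neg, integral_neg, neg_le_neg_iff] at h

/-- **Ville's inequality**. -/
theorem MeasureTheory.Supermartingale.measure_iUnion_ge_le [IsFiniteMeasure μ]
    (hf : Supermartingale f 𝒢 μ) (hnn : 0 ≤ f) {c : ℝ} (hc : 0 < c) :
    μ (⋃ n, {ω | c ≤ f n ω}) ≤ ENNReal.ofReal ((∫ ω, f 0 ω ∂μ) / c) := by
  rw [measure_iUnion_eq_iSup_accumulate]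
  refine iSup_le fun n => ?_
  let τ : Ω → ℕ∞ := fun ω => (hittingBtwn f (Set.Ici c) 0 n ω : ℕ)
  have hτ : IsStoppingTime 𝒢 τ :=
    hf.stronglyAdapted.adapted.isStoppingTime_hittingBtwn measurableSet_Ici
  have hτ_le : ∀ ω, τ ω ≤ n := fun ω => WithTop.coe_le_coe.2 (hittingBtwn_le ω)
  have hsub : Set.accumulate (fun n => {ω | c ≤ f n ω}) n ⊆ {ω | c ≤ stoppedValue f τ ω} := by
    intro ω hω
    obtain ⟨k, hk, hck⟩ := Set.mem_accumulate.1 hω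
    exact stoppedValue_hittingBtwn_mem ⟨k, ⟨Nat.zero_le k, hk⟩, hck⟩
  have hmarkov := mul_meas_ge_le_integral_of_nonneg (.of_forall fun ω => hnn _ ω)
    (integrable_stoppedValue ℕ hτ hf.integrable hτ_le) c
  refine (measure_mono hsub).trans (ENNReal.le_ofReal_iff_toReal_le (measure_ne_top _ _)
    (div_nonneg (integral_nonneg (hnn 0)) hc.le) |>.2 ?_)
  rw [le_div_iff₀' hc]
  exact hmarkov.trans (hf.integral_stoppedValue_le hτ hτ_le)

end Ville

theorem measure_iUnion_le_of_le_div_two_pow {s : ℕ → Set Ω} {δ : ℝ} (hδ : 0 ≤ δ)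
    (hs : ∀ k, μ (s k) ≤ ENNReal.ofReal (δ / 2 ^ (k + 1))) : μ (⋃ k, s k) ≤ ENNReal.ofReal δ := by
  have hgeom : ∀ k : ℕ, δ / 2 ^ (k + 1) = δ / 2 / 2 ^ k := fun k => by
    rw [pow_succ', div_div]
  calc μ (⋃ k, s k) ≤ ∑' k, μ (s k) := measure_iUnion_le s
    _ ≤ ∑' k : ℕ, ENNReal.ofReal (δ / 2 / 2 ^ k) := ENNReal.tsum_le_tsum fun k => hgeom k ▸ hs k
    _ = ENNReal.ofReal δ := by
      rw [← ENNReal.ofReal_tsum_of_nonneg (fun k => by positivity) (summable_geometric_two' δ),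
        tsum_geometric_two']

theorem ofReal_one_sub_le_measure_compl [IsProbabilityMeasure μ] {s : Set Ω} {δ : ℝ}
    (hδ : 0 ≤ δ) (hs : μ s ≤ ENNReal.ofReal δ) : ENNReal.ofReal (1 - δ) ≤ μ sᶜ := by
  rw [ENNReal.ofReal_sub 1 hδ, ENNReal.ofReal_one, tsub_le_iff_left]
  exact (measure_univ (μ := μ)).symm.le.trans
    ((measure_univ_le_add_compl s).trans (add_le_add_left hs _))

section ExponentialProcess

variable (μ) (F : Filtration ℕ m0) (X : ℕ → Ω → ℝ) (b : ℕ → ℝ) (l : ℝ)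

noncomputable def exponentialProcess (n : ℕ) (ω : Ω) : ℝ :=
  Real.exp (∑ t ∈ Icc 1 n, (l * (1 - l * b t / 2) * μ[X t|F (t - 1)] ω - l * X t ω))

theorem exponentialProcess_zero : exponentialProcess μ F X b l 0 = 1 := by
  ext ω
  simp [exponentialProcess]

theorem exponentialProcess_pos (n : ℕ) (ω : Ω) : 0 < exponentialProcess μ F X b l n ω :=
  Real.exp_pos _

theorem exponentialProcess_succ (n : ℕ) (ω : Ω) :
    exponentialProcess μ F X b l (n + 1) ω = exponentialProcess μ F X b l n ω *
      Real.exp (l * (1 - l * b (n + 1) / 2) * μ[X (n + 1)|F n] ω) *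
      Real.exp (-(l * X (n + 1) ω)) := by
  rw [exponentialProcess, exponentialProcess, ← Real.exp_add, ← Real.exp_add,
    sum_Icc_succ_top (Nat.le_add_left 1 n), Nat.add_sub_cancel, sub_eq_add_neg, add_assoc]

variable {μ F X b l}

theorem stronglyAdapted_exponentialProcess (hX : Adapted F X) :
    StronglyAdapted F (exponentialProcess μ F X b l) := fun _ =>
  Real.continuous_exp.comp_stronglyMeasurable <| Finset.stronglyMeasurable_fun_sum _ fun t ht =>
    ((stronglyMeasurable_condExp.mono (F.mono ((Nat.sub_le t 1).trans (mem_Icc.1 ht).2))).const_mul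
      _).sub (((hX t).stronglyMeasurable.mono (F.mono (mem_Icc.1 ht).2)).const_mul l)

theorem ae_exponentialProcess_le [IsFiniteMeasure μ] (hX : Adapted F X)
    (hXb : ∀ t ω, X t ω ∈ Set.Icc 0 (b t)) (hl : 0 ≤ l) (n : ℕ) :
    ∀ᵐ ω ∂μ, exponentialProcess μ F X b l n ω ≤ Real.exp (∑ t ∈ Icc 1 n, l * b t) := by
  have hcond : ∀ᵐ ω ∂μ, ∀ t, μ[X t|F (t - 1)] ω ∈ Set.Icc 0 (b t) := ae_all_iff.2 fun t =>
    ae_condExp_mem_Icc (F.le _) (.of_mem_Icc 0 (b t) ((hX t).mono (F.le t) le_rfl).aemeasurable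
      (.of_forall (hXb t))) (.of_forall (hXb t))
  filter_upwards [hcond] with ω hω
  refine Real.exp_le_exp.2 (sum_le_sum fun t _ => ?_)
  obtain ⟨hm0, hmb⟩ := hω t
  have hb0 : 0 ≤ b t := hm0.trans hmb
  nlinarith [mul_le_mul_of_nonneg_left hmb hl, mul_nonneg hl (hXb t ω).1,
    mul_nonneg (mul_nonneg hl (mul_nonneg hl hb0)) hm0]

theorem supermartingale_exponentialProcess [IsFiniteMeasure μ] (hX : Adapted F X)
    (hXb : ∀ t ω, X t ω ∈ Set.Icc 0 (b t)) (hl : 0 ≤ l) :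
    Supermartingale (exponentialProcess μ F X b l) F μ := by
  have hadapt : StronglyAdapted F (exponentialProcess μ F X b l) :=
    stronglyAdapted_exponentialProcess hX
  have hint : ∀ n, Integrable (exponentialProcess μ F X b l n) μ := fun n =>
    .of_mem_Icc 0 _ ((hadapt n).mono (F.le n)).measurable.aemeasurable
      ((ae_exponentialProcess_le hX hXb hl n).mono fun ω hω =>
        ⟨(exponentialProcess_pos μ F X b l n ω).le, hω⟩)
  refine supermartingale_nat hadapt hint fun n => ?_
  set A : Ω → ℝ := fun ω => l * (1 - l * b (n + 1) / 2) * μ[X (n + 1)|F n] ω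
  set G : Ω → ℝ := fun ω => exponentialProcess μ F X b l n ω * Real.exp (A ω)
  set H : Ω → ℝ := fun ω => Real.exp (-(l * X (n + 1) ω))
  have hsplit : exponentialProcess μ F X b l (n + 1) = G * H :=
    funext (exponentialProcess_succ μ F X b l n)
  have hG : StronglyMeasurable[F n] G :=
    (hadapt n).mul (Real.continuous_exp.comp_stronglyMeasurable
      (stronglyMeasurable_condExp.const_mul _))
  have hX_meas : Measurable (X (n + 1)) := (hX (n + 1)).mono (F.le _) le_rfl
  have hH : Integrable H μ := .of_mem_Icc 0 1
    (hX_meas.const_mul l).neg.exp.aemeasurable (.of_forall fun ω =>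
      ⟨(Real.exp_pos _).le, Real.exp_le_one_iff.2 (neg_nonpos.2 (mul_nonneg hl (hXb _ ω).1))⟩)
  have hpull : μ[G * H|F n] =ᵐ[μ] G * μ[H|F n] :=
    condExp_mul_of_stronglyMeasurable_left hG (hsplit ▸ hint (n + 1)) hH
  filter_upwards [hpull, condExp_exp_neg_mul_le (F.le n) hX_meas.aemeasurable (hXb (n + 1)) hl]
    with ω hpullω hcond
  rw [hsplit, hpullω, Pi.mul_apply]
  calc G ω * μ[H|F n] ω
      ≤ G ω * Real.exp ((l ^ 2 * b (n + 1) / 2 - l) * μ[X (n + 1)|F n] ω) :=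
        mul_le_mul_of_nonneg_left hcond (mul_pos (exponentialProcess_pos μ F X b l n ω)
          (Real.exp_pos _)).le
    _ = exponentialProcess μ F X b l n ω := by
        have hexponent : A ω + (l ^ 2 * b (n + 1) / 2 - l) * μ[X (n + 1)|F n] ω = 0 := by
          simp only [A]; ring
        rw [mul_assoc, ← Real.exp_add, hexponent, Real.exp_zero, mul_one]

end ExponentialProcess

end

theorem sum_le_two_mul_sum_add_of_sum_le {ι : Type*} {s : Finset ι} {m x b : ι → ℝ} {l L : ℝ}
    (hl : 0 < l) (hm : ∀ t ∈ s, 0 ≤ m t) (hlb : ∀ t ∈ s, l * b t ≤ 1)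
    (h : ∑ t ∈ s, (l * (1 - l * b t / 2) * m t - l * x t) ≤ L) :
    ∑ t ∈ s, m t ≤ 2 * ∑ t ∈ s, x t + 2 / l * L := by
  have hterm : ∀ t ∈ s, l / 2 * m t - l * x t ≤ l * (1 - l * b t / 2) * m t - l * x t :=
    fun t ht => by nlinarith [mul_nonneg hl.le (hm t ht), hlb t ht]
  have hsum : l / 2 * ∑ t ∈ s, m t - l * ∑ t ∈ s, x t ≤ L := by
    rw [mul_sum, mul_sum, ← sum_sub_distrib]
    exact (sum_le_sum hterm).trans h
  have hrescaled : ∑ t ∈ s, m t - 2 * ∑ t ∈ s, x t ≤ 2 / l * L := by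
    rw [div_mul_eq_mul_div, le_div_iff₀ hl]
    linarith
  linarith

theorem sum_le_of_forall_sum_lt_log {ι : Type*} {s : Finset ι} {m x b : ι → ℝ} {B δ : ℝ}
    (hB : 1 ≤ B) (hb : ∀ t ∈ s, b t ≤ B) (hm : ∀ t ∈ s, 0 ≤ m t) (hδ0 : 0 < δ) (hδ1 : δ < 1)
    (h : ∀ k : ℕ, ∑ t ∈ s, ((2 ^ k)⁻¹ * (1 - (2 ^ k)⁻¹ * b t / 2) * m t - (2 ^ k)⁻¹ * x t) <
      Real.log (2 ^ (k + 1) / δ)) :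
    ∑ t ∈ s, m t ≤ 2 * ∑ t ∈ s, x t + 4 * B * Real.log (1 / δ) + 8 * B * Real.log (4 * B) + 1 := by
  obtain ⟨n, hnB, hBn⟩ := exists_nat_pow_near hB (one_lt_two : (1 : ℝ) < 2)
  have hscale : ∀ t ∈ s, (2 ^ (n + 1) : ℝ)⁻¹ * b t ≤ 1 := fun t ht => by
    rw [inv_mul_le_one₀ (by positivity)]
    exact (hb t ht).trans hBn.le
  have hmain := sum_le_two_mul_sum_add_of_sum_le (by positivity) hm hscale (h (n + 1)).le
  have hlog_nonneg : 0 ≤ Real.log (2 ^ (n + 1 + 1) / δ) :=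
    Real.log_nonneg ((one_le_div hδ0).2 (hδ1.le.trans (one_le_pow₀ one_le_two)))
  have hlog_le : Real.log (2 ^ (n + 1 + 1) / δ) ≤ Real.log (1 / δ) + Real.log (4 * B) := by
    rw [← Real.log_mul (by positivity) (by positivity), one_div_mul_eq_div]
    exact Real.log_le_log (by positivity) (by gcongr; rw [pow_succ, pow_succ]; linarith)
  have h4B : 0 ≤ Real.log (4 * B) := Real.log_nonneg (by linarith)
  have hscale' : 2 / (2 ^ (n + 1) : ℝ)⁻¹ ≤ 4 * B := by
    rw [div_inv_eq_mul, pow_succ]; linarith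
  nlinarith [mul_le_mul hscale' hlog_le hlog_nonneg (by linarith)]

/-- Concentration for adapted nonnegative bounded processes (Kirschner & Krause 2018):
if `X t` is nonnegative, adapted, `X t ≤ b t` with `b` nondecreasing, then with probability
at least `1 − δ`, for every `T ≥ 1` (with `b T ≥ 1`),
`∑_{t=1}^T E[X t | F_{t-1}] ≤ 2 ∑_{t=1}^T X t + 4 b T log(1/δ) + 8 b T log(4 b T) + 1`. -/
theorem adapted_process_concentration {Ω : Type*} {m0 : MeasurableSpace Ω}
    (μ : Measure Ω) [IsProbabilityMeasure μ] (F : Filtration ℕ m0)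
    (X : ℕ → Ω → ℝ) (hadapt : Adapted F X) (hnn : ∀ t ω, 0 ≤ X t ω)
    (b : ℕ → ℝ) (hb : Monotone b) (hb1 : ∀ T, 1 ≤ T → 1 ≤ b T)
    (hX : ∀ t ω, X t ω ≤ b t)
    (δ : ℝ) (hδ0 : 0 < δ) (hδ1 : δ < 1) :
    ENNReal.ofReal (1 - δ) ≤
      μ {ω | ∀ T : ℕ, 1 ≤ T →
        ∑ t ∈ Finset.Icc 1 T, (μ[X t | F (t - 1)]) ω ≤
          2 * ∑ t ∈ Finset.Icc 1 T, X t ω +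
            4 * b T * Real.log (1 / δ) + 8 * b T * Real.log (4 * b T) + 1} := by
  have hXb : ∀ t ω, X t ω ∈ Set.Icc 0 (b t) := fun t ω => ⟨hnn t ω, hX t ω⟩
  let crossing : ℕ → Set Ω := fun k =>
    ⋃ n, {ω | 2 ^ (k + 1) / δ ≤ exponentialProcess μ F X b (2 ^ k)⁻¹ n ω}
  have hcrossing : ∀ k, μ (crossing k) ≤ ENNReal.ofReal (δ / 2 ^ (k + 1)) := fun k => by
    have hville := (supermartingale_exponentialProcess (μ := μ) (l := (2 ^ k)⁻¹) hadapt hXb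
      (by positivity)).measure_iUnion_ge_le (fun n ω => (exponentialProcess_pos μ F X b _ n ω).le)
      (by positivity : (0 : ℝ) < 2 ^ (k + 1) / δ)
    simpa [exponentialProcess_zero, one_div_div] using hville
  have hgood : ∀ᵐ ω ∂μ, ω ∈ (⋃ k, crossing k)ᶜ → ∀ T : ℕ, 1 ≤ T →
      ∑ t ∈ Finset.Icc 1 T, (μ[X t | F (t - 1)]) ω ≤ 2 * ∑ t ∈ Finset.Icc 1 T, X t ω +
        4 * b T * Real.log (1 / δ) + 8 * b T * Real.log (4 * b T) + 1 := by
    have hm : ∀ᵐ ω ∂μ, ∀ t, 0 ≤ μ[X t|F (t - 1)] ω :=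
      ae_all_iff.2 fun t => condExp_nonneg (.of_forall (hnn t) : 0 ≤ᵐ[μ] X t)
    filter_upwards [hm] with ω hmω hω T hT
    simp only [crossing, Set.mem_compl_iff, Set.mem_iUnion, Set.mem_ofPred_eq, not_exists,
      not_le] at hω
    refine sum_le_of_forall_sum_lt_log (hb1 T hT) (fun t ht => hb (mem_Icc.1 ht).2)
      (fun t _ => hmω t) hδ0 hδ1 fun k => ?_
    rw [Real.lt_log_iff_exp_lt (by positivity)]
    exact hω k T
  exact (ofReal_one_sub_le_measure_compl hδ0.le
    (measure_iUnion_le_of_le_div_two_pow hδ0.le hcrossing)).trans (measure_mono_ae hgood)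
end
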